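/- arXiv:1710.02023 — 4 statements merged into one kernel-verified Lean document; each statement's English description precedes it below -/
import Mathlib

section
/- Let q, N, k be integers with N ≥ k ≥ 1, and let ω(1), ..., ω(q), θ be reals satisfying 0 < ω(j) ≤ θ for all j, Σ_{j=1}^q ω(j) = k + 1 + θ(q − 2N + k − 1), and θ ≥ (k+1)/(2N − k + 1). If η_1, ..., η_q ≥ 0 satisfy Σ_{j=1}^q (1 − η_j) − 2N + k − 1 > (2N−k+1)k/2, then Σ_{j=1}^q ω(j)(1 − η_j) − (k+1) > k(k+1)/2. -/
open Finset

/-- With Nochka weights ω(j) and Nochka constant θ (0 < ω(j) ≤ θ,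
Σ ω(j) = k+1+θ(q−2N+k−1), θ ≥ (k+1)/(2N−k+1)), if the nonnegative reals η_j satisfy
Σ (1−η_j) − 2N + k − 1 > (2N−k+1)k/2, then Σ ω(j)(1−η_j) − (k+1) > k(k+1)/2. -/
theorem nochka_weight_ineq (q : ℕ) (N k : ℤ) (hk : 1 ≤ k) (hNk : k ≤ N)
    (ω : Fin q → ℝ) (θ : ℝ)
    (hω : ∀ j, 0 < ω j ∧ ω j ≤ θ)
    (hsum : ∑ j, ω j = (k : ℝ) + 1 + θ * ((q : ℝ) - 2 * (N : ℝ) + (k : ℝ) - 1))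
    (hθ : θ ≥ ((k : ℝ) + 1) / (2 * (N : ℝ) - (k : ℝ) + 1))
    (η : Fin q → ℝ) (hη : ∀ j, 0 ≤ η j)
    (hmain : (∑ j, (1 - η j)) - 2 * (N : ℝ) + (k : ℝ) - 1 >
      (2 * (N : ℝ) - (k : ℝ) + 1) * (k : ℝ) / 2) :
    (∑ j, ω j * (1 - η j)) - ((k : ℝ) + 1) > (k : ℝ) * ((k : ℝ) + 1) / 2 := by
  have hkR : (1:ℝ) ≤ (k:ℝ) := by exact_mod_cast hk
  have hNkR : (k:ℝ) ≤ (N:ℝ) := by exact_mod_cast hNk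
  have hd : (0:ℝ) < 2 * (N:ℝ) - (k:ℝ) + 1 := by linarith
  have hθpos : 0 < θ := lt_of_lt_of_le (div_pos (by linarith) hd) hθ
  have hθd : θ * (2 * (N:ℝ) - (k:ℝ) + 1) ≥ (k:ℝ) + 1 := by
    rw [ge_iff_le, ← div_le_iff₀ hd]
    exact hθ
  have h1 : ∑ j, ω j * (1 - η j) ≥ ∑ j, ω j - θ * ∑ j, η j := by
    rw [mul_sum, ← Finset.sum_sub_distrib]
    apply Finset.sum_le_sum
    intro j _
    have := mul_le_mul_of_nonneg_right (hω j).2 (hη j)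
    nlinarith [this]
  have hq : (∑ j : Fin q, (1 - η j)) = (q:ℝ) - ∑ j, η j := by
    rw [Finset.sum_sub_distrib, Finset.sum_const, Finset.card_univ, Fintype.card_fin]
    simp
  rw [hq] at hmain
  set A := ∑ j, η j with hA
  have h2 : θ * ((q:ℝ) - A - 2 * (N:ℝ) + (k:ℝ) - 1) >
      θ * ((2 * (N:ℝ) - (k:ℝ) + 1) * (k:ℝ) / 2) :=
    mul_lt_mul_of_pos_left hmain hθpos
  nlinarith [h1, h2, hθd, hsum, mul_le_mul_of_nonneg_right hθd (by linarith : (0:ℝ) ≤ (k:ℝ)/2)]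
end

section
/- For Nochka weights with θ ≥ (k+1)/(2N−k+1), ω(j) ≤ θ for all j, and Σ ω(j) − k − 1 = θ(q − 2N + k − 1): if Σ_{j=1}^q η_j ≥ 0 then 2(Σ_{j=1}^q ω(j)(1−η_j) − k − 1) ≥ 2(k+1)·(Σ_{j=1}^q (1−η_j) − 2N + k − 1)/(2N − k + 1), provided Σ_{j=1}^q (1−η_j) − 2N + k − 1 ≥ 0. -/
open Finset

/-- Nochka-weight estimate: with 0 < ω(j) ≤ θ ≤ 1, Σ ω(j) = k+1+θ(q−2N+k−1),
(k+1)/(2N−k+1) ≤ θ, and nonnegative η_j, if Σ (1−η_j) − 2N + k − 1 ≥ 0 then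
2(Σ ω(j)(1−η_j) − k − 1) ≥ 2(k+1)(Σ (1−η_j) − 2N + k − 1)/(2N − k + 1). -/
theorem nochka_chain (q N k : ℕ) (hk : 1 ≤ k) (hNk : k ≤ N) (hq : (q : ℤ) > 2 * N - k + 1)
    (ω : Fin q → ℝ) (θ : ℝ)
    (hω : ∀ j, 0 < ω j ∧ ω j ≤ θ) (hθ1 : θ ≤ 1)
    (hsum : ∑ j, ω j = (k : ℝ) + 1 + θ * ((q : ℝ) - 2 * (N : ℝ) + (k : ℝ) - 1))
    (hθ : ((k : ℝ) + 1) / (2 * (N : ℝ) - (k : ℝ) + 1) ≤ θ)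
    (η : Fin q → ℝ) (hη : ∀ j, 0 ≤ η j)
    (hpos : (∑ j, (1 - η j)) - 2 * (N : ℝ) + (k : ℝ) - 1 ≥ 0) :
    2 * ((∑ j, ω j * (1 - η j)) - (k : ℝ) - 1) ≥
      2 * ((k : ℝ) + 1) * ((∑ j, (1 - η j)) - 2 * (N : ℝ) + (k : ℝ) - 1) /
        (2 * (N : ℝ) - (k : ℝ) + 1) := by
  have hden : (0 : ℝ) < 2 * (N : ℝ) - (k : ℝ) + 1 := by
    have : (k : ℝ) ≤ (N : ℝ) := by exact_mod_cast hNk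
    have : (1 : ℝ) ≤ (N : ℝ) := by exact_mod_cast le_trans hk hNk
    linarith
  have h2 : ∑ j, ω j * η j ≤ θ * ∑ j, η j := by
    rw [Finset.mul_sum]
    exact Finset.sum_le_sum fun j _ => mul_le_mul_of_nonneg_right (hω j).2 (hη j)
  have hsplit : ∑ j, ω j * (1 - η j) = ∑ j, ω j - ∑ j, ω j * η j := by
    rw [← Finset.sum_sub_distrib]
    exact Finset.sum_congr rfl fun j _ => by ring
  have hsplit2 : (∑ j, (1 - η j)) = (q : ℝ) - ∑ j, η j := by
    simp [Finset.sum_sub_distrib]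
  have key : (∑ j, ω j * (1 - η j)) - (k : ℝ) - 1 ≥
      θ * ((∑ j, (1 - η j)) - 2 * (N : ℝ) + (k : ℝ) - 1) := by
    rw [hsplit, hsum, hsplit2]
    nlinarith [h2]
  rw [ge_iff_le, div_le_iff₀ hden]
  nlinarith [mul_le_mul_of_nonneg_right hθ hpos, key,
    (div_le_iff₀ hden).mp hθ, hpos, hden]
end

section
/- (Nochka) Given hyperplanes H_1, ..., H_q (q > 2N − k + 1) in ℙ^k(ℂ) located in N-subgeneral position, there exist rational numbers ω(1), ..., ω(q) and θ such that: (i) 0 < ω(j) ≤ θ ≤ 1 for all j; (ii) Σ_{j=1}^q ω(j) = k + 1 + θ(q − 2N + k − 1); (iii) (k+1)/(2N−k+1) ≤ θ ≤ (k+1)/(N+1); (iv) for every subset R of {1,...,q} with 0 < #R ≤ N+1, Σ_{j∈R} ω(j) ≤ d(R), where d(R) is the dimension of the span of the normal vectors of the hyperplanes indexed by R. -/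
open Finset

variable {q k : ℕ}

/-- d(R): the dimension of the span of the normal vectors A_j, j ∈ R. -/
noncomputable def dimSpan (A : Fin q → (Fin (k + 1) → ℂ)) (R : Finset (Fin q)) : ℕ :=
  Module.finrank ℂ (Submodule.span ℂ (A '' (R : Set (Fin q))))

/-- The hyperplanes with normal vectors A_j are in N-subgeneral position if every
subset of at least N+1 indices spans ℂ^{k+1}. -/
def SubgeneralPosition (N : ℕ) (A : Fin q → (Fin (k + 1) → ℂ)) : Prop :=
  ∀ R : Finset (Fin q), N + 1 ≤ R.card → dimSpan A R = k + 1

/-!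
Let `θ` be the largest ratio `(k + 1 - d S) / (2N - k + 1 - #S)` over `#S ≤ N`, attained at `S₀`,
and let `F R = θ #R + min_{S ⊆ R ∩ S₀} (d S - θ #S)`. Then `F` is normalized, monotone and
submodular, `F {j} = θ`, `F R ≤ d R` whenever `#R ≤ N + 1`, and
`F univ = k + 1 + θ (q - 2N + k - 1)`. The greedy algorithm started at `j` yields a base of the
polymatroid of `F` whose `j`-th coordinate is `θ`; the average `ω` of these `q` bases is a base
with positive coordinates, and `ω j ≤ F {j} = θ`, `ω(R) ≤ F R ≤ d R`.
-/

section Polymatroid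

variable {ι : Type*}

def Submodular [DecidableEq ι] {β : Type*} [Add β] [LE β] (F : Finset ι → β) : Prop :=
  ∀ X Y, F (X ∪ Y) + F (X ∩ Y) ≤ F X + F Y

section SubsetMin

variable {β : Type*} [LinearOrder β] {g : Finset ι → β} {S X : Finset ι}

def subsetMin (g : Finset ι → β) (X : Finset ι) : β :=
  X.powerset.inf' X.powerset_nonempty g

lemma subsetMin_le (h : S ⊆ X) : subsetMin g X ≤ g S :=
  inf'_le g (mem_powerset.2 h)

lemma le_subsetMin {a : β} (h : ∀ S ⊆ X, a ≤ g S) : a ≤ subsetMin g X :=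
  le_inf' _ _ fun S hS => h S (mem_powerset.1 hS)

lemma exists_subset_eq_subsetMin (g : Finset ι → β) (X : Finset ι) :
    ∃ S ⊆ X, g S = subsetMin g X := by
  obtain ⟨S, hS, h⟩ := exists_mem_eq_inf' X.powerset_nonempty g
  exact ⟨S, mem_powerset.1 hS, h.symm⟩

lemma subsetMin_empty (g : Finset ι → β) : subsetMin g ∅ = g ∅ := by
  simp [subsetMin]

lemma submodular_subsetMin [DecidableEq ι] [AddCommMonoid β] [IsOrderedAddMonoid β]
    (hg : Submodular g) : Submodular (subsetMin g) := by
  intro X Y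
  obtain ⟨T₁, hT₁, h₁⟩ := exists_subset_eq_subsetMin g X
  obtain ⟨T₂, hT₂, h₂⟩ := exists_subset_eq_subsetMin g Y
  calc subsetMin g (X ∪ Y) + subsetMin g (X ∩ Y)
      ≤ g (T₁ ∪ T₂) + g (T₁ ∩ T₂) :=
        add_le_add (subsetMin_le (union_subset_union hT₁ hT₂))
          (subsetMin_le (inter_subset_inter hT₁ hT₂))
    _ ≤ g T₁ + g T₂ := hg T₁ T₂
    _ = subsetMin g X + subsetMin g Y := by rw [h₁, h₂]

end SubsetMin

variable {𝕜 : Type*} [Field 𝕜] [LinearOrder 𝕜] {F : Finset ι → 𝕜} {A : Finset ι} {v : ι → 𝕜}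

structure IsPartialBase (F : Finset ι → 𝕜) (A : Finset ι) (v : ι → 𝕜) : Prop where
  nonneg : ∀ i, 0 ≤ v i
  eq_zero : ∀ i ∉ A, v i = 0
  sum_eq : ∑ i ∈ A, v i = F A
  sum_le : ∀ R, ∑ i ∈ R, v i ≤ F R

lemma isPartialBase_empty (h0 : F ∅ = 0) (hmono : Monotone F) : IsPartialBase F ∅ 0 where
  nonneg _ := le_rfl
  eq_zero _ _ := rfl
  sum_eq := by simp [h0]
  sum_le R := by simpa [h0] using hmono (empty_subset R)

lemma IsPartialBase.update_insert [DecidableEq ι] [IsStrictOrderedRing 𝕜]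
    (hv : IsPartialBase F A v) {x : ι} (hx : x ∉ A)
    (hmono : Monotone F) (hsub : Submodular F) :
    IsPartialBase F (insert x A) (Function.update v x (F (insert x A) - F A)) where
  nonneg i := by
    rcases eq_or_ne i x with rfl | hi
    · simpa using hmono (subset_insert i A)
    · simpa [hi] using hv.nonneg i
  eq_zero i hi := by
    rw [mem_insert, not_or] at hi
    simpa [hi.1] using hv.eq_zero i hi.2
  sum_eq := by
    rw [sum_insert hx, sum_update_of_notMem hx, Function.update_self, hv.sum_eq, sub_add_cancel]
  sum_le R := by
    by_cases hxR : x ∈ R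
    · have hR : ∑ i ∈ R.erase x, v i = ∑ i ∈ R ∩ A, v i := by
        refine (sum_subset (fun i hi => ?_) fun i hi hiA => ?_).symm
        · exact mem_erase.2 ⟨ne_of_mem_of_not_mem (mem_inter.1 hi).2 hx, (mem_inter.1 hi).1⟩
        · exact hv.eq_zero i fun h => hiA (mem_inter.2 ⟨mem_of_mem_erase hi, h⟩)
      rw [← add_sum_erase R _ hxR, Function.update_self, sum_update_of_notMem (notMem_erase x R),
        hR]
      -- `F (insert x A) - F A ≤ F (R ∪ A) - F A ≤ F R - F (R ∩ A)`
      have hsubRA := hsub R A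
      have hmonoRA := hmono (insert_subset (mem_union_left A hxR) subset_union_right)
      have hRA := hv.sum_le (R ∩ A)
      linarith
    · rw [sum_update_of_notMem hxR]
      exact hv.sum_le R

lemma IsPartialBase.exists_extend [DecidableEq ι] [IsStrictOrderedRing 𝕜]
    (hv : IsPartialBase F A v) (hmono : Monotone F)
    (hsub : Submodular F) (C : Finset ι) (hAC : Disjoint A C) :
    ∃ w, IsPartialBase F (A ∪ C) w ∧ ∀ i ∈ A, w i = v i := by
  induction C using Finset.induction_on with
  | empty => exact ⟨v, by simpa using hv, fun _ _ => rfl⟩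
  | insert x C hxC ih =>
    rw [disjoint_insert_right] at hAC
    obtain ⟨w, hw, hwv⟩ := ih hAC.2
    have hx : x ∉ A ∪ C := by simp [hAC.1, hxC]
    refine ⟨_, union_insert x A C ▸ hw.update_insert hx hmono hsub, fun i hi => ?_⟩
    rw [Function.update_of_ne (ne_of_mem_of_not_mem hi hAC.1), hwv i hi]

variable [Fintype ι] [DecidableEq ι] [IsStrictOrderedRing 𝕜]

/-- The greedy algorithm, started at `j`. -/
lemma exists_isPartialBase_univ (h0 : F ∅ = 0) (hmono : Monotone F) (hsub : Submodular F)
    (j : ι) : ∃ v, IsPartialBase F univ v ∧ v j = F {j} := by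
  have hj := (isPartialBase_empty h0 hmono).update_insert (notMem_empty j) hmono hsub
  obtain ⟨v, hv, hvj⟩ := hj.exists_extend hmono hsub {j}ᶜ (by simp)
  refine ⟨v, by simpa using hv, ?_⟩
  rw [hvj j (mem_insert_self j ∅)]
  simp [h0]

/-- The average of the greedy vectors started at each `j`. -/
theorem exists_pos_sum_le_of_submodular (h0 : F ∅ = 0) (hmono : Monotone F)
    (hsub : Submodular F) (hpos : ∀ j, 0 < F {j}) :
    ∃ w : ι → 𝕜, (∀ j, 0 < w j) ∧ ∑ j, w j = F univ ∧ ∀ R, ∑ j ∈ R, w j ≤ F R := by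
  rcases isEmpty_or_nonempty ι with _ | _
  · exact ⟨0, isEmptyElim, by simp [univ_eq_empty, h0],
      fun R => by simp [eq_empty_of_isEmpty R, h0]⟩
  choose v hv hvj using exists_isPartialBase_univ h0 hmono hsub
  set n : 𝕜 := (Fintype.card ι : 𝕜)
  have hn : 0 < n := by simp [n, Fintype.card_pos]
  have hsum (R : Finset ι) : ∑ j ∈ R, n⁻¹ * ∑ j₀, v j₀ j = n⁻¹ * ∑ j₀, ∑ j ∈ R, v j₀ j := by
    rw [← mul_sum, sum_comm]
  refine ⟨fun j => n⁻¹ * ∑ j₀, v j₀ j, fun j => ?_, ?_, fun R => ?_⟩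
  · refine mul_pos (inv_pos.2 hn) ((hpos j).trans_le ?_)
    rw [← hvj]
    exact single_le_sum (fun j₀ _ => (hv j₀).nonneg j) (mem_univ j)
  · rw [hsum, sum_congr rfl fun j₀ _ => (hv j₀).sum_eq, sum_const, card_univ, nsmul_eq_mul,
      inv_mul_cancel_left₀ hn.ne']
  · rw [hsum]
    calc n⁻¹ * ∑ j₀, ∑ j ∈ R, v j₀ j ≤ n⁻¹ * ∑ _j₀ : ι, F R :=
          mul_le_mul_of_nonneg_left (sum_le_sum fun j₀ _ => (hv j₀).sum_le R) (by positivity)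
      _ = F R := by rw [sum_const, card_univ, nsmul_eq_mul, inv_mul_cancel_left₀ hn.ne']

end Polymatroid

section Nochka

variable {ι : Type*} {N k : ℕ} {d : Finset ι → ℕ} {θ : ℚ} {S₀ R T : Finset ι}

def excess (d : Finset ι → ℕ) (θ : ℚ) (S : Finset ι) : ℚ := d S - θ * S.card

/-- Equivalently, `θ = max_{#S ≤ N} (k + 1 - d S) / (2N - k + 1 - #S)`, attained at `S₀`. -/
structure IsNochkaConstant (N k : ℕ) (d : Finset ι → ℕ) (θ : ℚ) (S₀ : Finset ι) : Prop where
  card_le : S₀.card ≤ N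
  excess_eq : excess d θ S₀ = k + 1 - θ * (2 * N - k + 1)
  le_excess : ∀ S : Finset ι, S.card ≤ N → k + 1 - θ * (2 * N - k + 1) ≤ excess d θ S

lemma exists_isNochkaConstant [Fintype ι] (hkN : k ≤ N) (d : Finset ι → ℕ) :
    ∃ θ S₀, IsNochkaConstant N k d θ S₀ := by
  set D : Finset ι → ℚ := fun S => 2 * N - k + 1 - S.card
  have hD {S : Finset ι} (hS : S.card ≤ N) : 0 < D S := by
    have : (S.card : ℚ) ≤ N := by exact_mod_cast hS
    have : (k : ℚ) ≤ N := by exact_mod_cast hkN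
    simp only [D]
    linarith
  obtain ⟨S₀, hS₀, hmax⟩ := (univ.filter (·.card ≤ N)).exists_max_image
    (fun S => (k + 1 - d S : ℚ) / D S) ⟨∅, by simp⟩
  have hS₀N := (mem_filter.1 hS₀).2
  refine ⟨(k + 1 - d S₀) / D S₀, S₀, hS₀N, ?_, fun S hS => ?_⟩
  · have := hD hS₀N
    simp only [excess, D] at this ⊢
    field_simp
    ring
  · have := (div_le_iff₀ (hD hS)).1 (hmax S (by simp [hS]))
    simp only [excess, D] at this ⊢
    linarith

lemma IsNochkaConstant.div_le (h : IsNochkaConstant N k d θ S₀) (hd : d ∅ = 0) (hkN : k ≤ N) :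
    (k + 1 : ℚ) / (2 * N - k + 1) ≤ θ := by
  have h0 := h.le_excess ∅ (Nat.zero_le N)
  have : (k : ℚ) ≤ N := by exact_mod_cast hkN
  simp only [excess, hd, card_empty, CharP.cast_eq_zero, mul_zero, sub_zero] at h0
  rw [div_le_iff₀ (by linarith)]
  linarith

lemma IsNochkaConstant.pos (h : IsNochkaConstant N k d θ S₀) (hd : d ∅ = 0) (hkN : k ≤ N) :
    0 < θ := by
  refine lt_of_lt_of_le (div_pos (by positivity) ?_) (h.div_le hd hkN)
  have : (k : ℚ) ≤ N := by exact_mod_cast hkN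
  linarith

variable [DecidableEq ι]

lemma submodular_excess (hd : Submodular d) (θ : ℚ) : Submodular (excess d θ) := by
  intro X Y
  have h : ((d (X ∪ Y) + d (X ∩ Y) : ℕ) : ℚ) ≤ d X + d Y := by exact_mod_cast hd X Y
  have hcard : ((X ∪ Y).card + (X ∩ Y).card : ℚ) = X.card + Y.card := by
    exact_mod_cast card_union_add_card_inter X Y
  simp only [excess]
  push_cast at h
  linear_combination h - θ * hcard

structure IsSubgeneralRank (N k : ℕ) (d : Finset ι → ℕ) : Prop where
  empty : d ∅ = 0
  mono : Monotone d
  submodular : Submodular d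
  le_card : ∀ S, d S ≤ S.card
  singleton : ∀ j, d {j} = 1
  full : ∀ S : Finset ι, N + 1 ≤ S.card → d S = k + 1

lemma IsSubgeneralRank.card_add_le [Fintype ι] (hd : IsSubgeneralRank N k d)
    (hι : N + 1 ≤ Fintype.card ι) {S : Finset ι} (hS : S.card ≤ N + 1) :
    S.card + k ≤ d S + N := by
  obtain ⟨S', hSS', hS'⟩ := exists_superset_card_eq hS hι
  have h := hd.submodular S (S' \ S)
  rw [union_sdiff_of_subset hSS', inter_sdiff_self, hd.empty, hd.full S' hS'.ge] at h
  have := hd.le_card (S' \ S)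
  have := card_sdiff_add_card_eq_card hSS'
  omega

namespace IsNochkaConstant

lemma le_excess_of_card_le (h : IsNochkaConstant N k d θ S₀) (hd : IsSubgeneralRank N k d)
    (hθ : 0 ≤ θ) {S : Finset ι} (hS : (S.card : ℚ) ≤ 2 * N - k + 1) :
    k + 1 - θ * (2 * N - k + 1) ≤ excess d θ S := by
  rcases le_or_gt S.card N with hSN | hSN
  · exact h.le_excess S hSN
  · rw [excess, hd.full S hSN]
    push_cast
    nlinarith

variable [Fintype ι]

lemma le_div (h : IsNochkaConstant N k d θ S₀) (hd : IsSubgeneralRank N k d)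
    (hι : N + 1 ≤ Fintype.card ι) (hkN : k ≤ N) : θ ≤ (k + 1 : ℚ) / (N + 1) := by
  have hlb : (S₀.card + k : ℚ) ≤ d S₀ + N := by
    exact_mod_cast hd.card_add_le hι (h.card_le.trans N.le_succ)
  have hs : (S₀.card : ℚ) ≤ N := by exact_mod_cast h.card_le
  have hkN' : (k : ℚ) ≤ N := by exact_mod_cast hkN
  have heq := h.excess_eq
  simp only [excess] at heq
  rw [le_div_iff₀ (by positivity)]
  refine le_of_mul_le_mul_right (a := (2 * N - k + 1 - S₀.card : ℚ)) ?_ (by linarith)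
  -- `θ (2N - k + 1 - #S₀) = k + 1 - d S₀`, and `d S₀ ≥ max 0 (#S₀ - (N - k))`
  rcases le_total (S₀.card : ℚ) (N - k) with hsk | hsk
  · nlinarith [(d S₀).cast_nonneg (α := ℚ)]
  · nlinarith [mul_le_mul_of_nonneg_right (show (S₀.card - (N - k) : ℚ) ≤ d S₀ by linarith)
      (show (0 : ℚ) ≤ N + 1 by positivity), mul_nonneg (sub_nonneg.2 hsk) (sub_nonneg.2 hkN')]

lemma le_one (h : IsNochkaConstant N k d θ S₀) (hd : IsSubgeneralRank N k d)
    (hι : N + 1 ≤ Fintype.card ι) (hkN : k ≤ N) : θ ≤ 1 := by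
  refine (h.le_div hd hι hkN).trans ((div_le_one (by positivity)).2 ?_)
  exact_mod_cast Nat.succ_le_succ hkN

lemma card_union_le_of_excess_neg (h : IsNochkaConstant N k d θ S₀) (hd : IsSubgeneralRank N k d)
    (hι : N + 1 ≤ Fintype.card ι) (hkN : k ≤ N) (hT : T.card ≤ N) (hneg : excess d θ T < 0) :
    ((S₀ ∪ T).card : ℚ) ≤ 2 * N - k + 1 := by
  have hθ1 := h.le_one hd hι hkN
  have hlb₀ : (S₀.card + k : ℚ) ≤ d S₀ + N := by
    exact_mod_cast hd.card_add_le hι (h.card_le.trans N.le_succ)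
  have hlb : (T.card + k : ℚ) ≤ d T + N := by
    exact_mod_cast hd.card_add_le hι (hT.trans N.le_succ)
  have hunion : ((S₀ ∪ T).card : ℚ) ≤ S₀.card + T.card := by
    exact_mod_cast Finset.card_union_le S₀ T
  have heq := h.excess_eq
  simp only [excess] at heq hneg
  by_contra! hlt
  nlinarith [mul_nonneg (sub_nonneg.2 hθ1)
    (by linarith : (0 : ℚ) ≤ S₀.card + T.card - (2 * N - k + 1))]

lemma excess_inter_le (h : IsNochkaConstant N k d θ S₀) (hd : IsSubgeneralRank N k d)
    (hι : N + 1 ≤ Fintype.card ι) (hkN : k ≤ N) (hT : T.card ≤ N) (hneg : excess d θ T < 0) :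
    excess d θ (S₀ ∩ T) ≤ excess d θ T := by
  have hθ := (h.pos hd.empty hkN).le
  have hsub := submodular_excess hd.submodular θ S₀ T
  have hunion := h.le_excess_of_card_le hd hθ (h.card_union_le_of_excess_neg hd hι hkN hT hneg)
  linarith [h.excess_eq]

end IsNochkaConstant

end Nochka

section NochkaRank

variable {ι : Type*} [DecidableEq ι] {N k : ℕ} {d : Finset ι → ℕ} {θ : ℚ} {S₀ R : Finset ι}

/-- Restricting the minimum to subsets of `S₀` makes `nochkaRank` submodular, and by
`IsNochkaConstant.excess_inter_le` it loses nothing against `excess d θ R` when `#R ≤ N`. -/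
def nochkaRank (d : Finset ι → ℕ) (θ : ℚ) (S₀ R : Finset ι) : ℚ :=
  θ * R.card + subsetMin (excess d θ) (R ∩ S₀)

lemma nochkaRank_empty (hd : d ∅ = 0) : nochkaRank d θ S₀ ∅ = 0 := by
  simp [nochkaRank, subsetMin_empty, excess, hd]

lemma monotone_nochkaRank (hd : Monotone d) (hθ : 0 ≤ θ) : Monotone (nochkaRank d θ S₀) := by
  intro X Y hXY
  obtain ⟨T, hT, hTeq⟩ := exists_subset_eq_subsetMin (excess d θ) (Y ∩ S₀)
  have hXT : subsetMin (excess d θ) (X ∩ S₀) ≤ excess d θ (X ∩ T) :=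
    subsetMin_le (inter_subset_inter_left (hT.trans inter_subset_right))
  have hd' : (d (X ∩ T) : ℚ) ≤ d T := by exact_mod_cast hd inter_subset_right
  have hcard : ((X ∪ T).card + (X ∩ T).card : ℚ) = X.card + T.card := by
    exact_mod_cast card_union_add_card_inter X T
  have hY : ((X ∪ T).card : ℚ) ≤ Y.card := by
    exact_mod_cast card_le_card (union_subset hXY (hT.trans inter_subset_left))
  simp only [nochkaRank, ← hTeq]
  simp only [excess] at hXT ⊢
  nlinarith

lemma submodular_nochkaRank (hd : Submodular d) : Submodular (nochkaRank d θ S₀) := by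
  intro X Y
  have hmin := submodular_subsetMin (submodular_excess hd θ) (X ∩ S₀) (Y ∩ S₀)
  rw [← union_inter_distrib_right, ← inter_inter_distrib_right] at hmin
  have hcard : ((X ∪ Y).card + (X ∩ Y).card : ℚ) = X.card + Y.card := by
    exact_mod_cast card_union_add_card_inter X Y
  simp only [nochkaRank]
  linear_combination hmin + θ * hcard

lemma nochkaRank_singleton (hd : IsSubgeneralRank N k d) (hθ1 : θ ≤ 1) (j : ι) :
    nochkaRank d θ S₀ {j} = θ := by
  have hmin : subsetMin (excess d θ) ({j} ∩ S₀) = 0 := by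
    refine le_antisymm ?_ (le_subsetMin fun S hS => ?_)
    · simpa [excess, hd.empty] using subsetMin_le (g := excess d θ) (empty_subset ({j} ∩ S₀))
    · rcases subset_singleton_iff.1 (hS.trans inter_subset_left) with rfl | rfl
      · simp [excess, hd.empty]
      · simpa [excess, hd.singleton] using hθ1
  simp [nochkaRank, hmin]

lemma nochkaRank_univ [Fintype ι] (h : IsNochkaConstant N k d θ S₀) :
    nochkaRank d θ S₀ univ = k + 1 + θ * (Fintype.card ι - 2 * N + k - 1) := by
  have hmin : subsetMin (excess d θ) (univ ∩ S₀) = excess d θ S₀ := by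
    rw [univ_inter]
    refine le_antisymm (subsetMin_le subset_rfl) (le_subsetMin fun S hS => ?_)
    exact h.excess_eq ▸ h.le_excess S ((card_le_card hS).trans h.card_le)
  rw [nochkaRank, hmin, h.excess_eq, card_univ]
  ring

lemma nochkaRank_le [Fintype ι] (h : IsNochkaConstant N k d θ S₀) (hd : IsSubgeneralRank N k d)
    (hι : N + 1 ≤ Fintype.card ι) (hkN : k ≤ N) (hR : R.card ≤ N + 1) :
    nochkaRank d θ S₀ R ≤ d R := by
  have hmin0 : subsetMin (excess d θ) (R ∩ S₀) ≤ 0 := by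
    simpa [excess, hd.empty] using subsetMin_le (g := excess d θ) (empty_subset (R ∩ S₀))
  rcases hR.lt_or_eq with hR | hR
  · suffices subsetMin (excess d θ) (R ∩ S₀) ≤ excess d θ R by
      simp only [nochkaRank, excess] at this ⊢
      linarith
    by_cases hneg : excess d θ R < 0
    · rw [inter_comm]
      exact (subsetMin_le subset_rfl).trans
        (h.excess_inter_le hd hι hkN (Nat.lt_succ_iff.1 hR) hneg)
    · exact hmin0.trans (not_lt.1 hneg)
  · have hθ := h.le_div hd hι hkN
    rw [le_div_iff₀ (by positivity)] at hθ
    rw [nochkaRank, hd.full R hR.ge, hR]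
    push_cast
    linarith

theorem exists_nochka_weights [Fintype ι] (hd : IsSubgeneralRank N k d) (hkN : k ≤ N)
    (hι : N + 1 ≤ Fintype.card ι) :
    ∃ (ω : ι → ℚ) (θ : ℚ), (∀ j, 0 < ω j ∧ ω j ≤ θ) ∧ θ ≤ 1 ∧
      ∑ j, ω j = k + 1 + θ * (Fintype.card ι - 2 * N + k - 1) ∧
      (k + 1 : ℚ) / (2 * N - k + 1) ≤ θ ∧ θ ≤ (k + 1 : ℚ) / (N + 1) ∧
      ∀ R : Finset ι, R.card ≤ N + 1 → ∑ j ∈ R, ω j ≤ d R := by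
  obtain ⟨θ, S₀, h⟩ := exists_isNochkaConstant hkN d
  have hθ0 := h.pos hd.empty hkN
  have hθ1 := h.le_one hd hι hkN
  obtain ⟨ω, hωpos, hωsum, hωle⟩ := exists_pos_sum_le_of_submodular (nochkaRank_empty hd.empty)
    (monotone_nochkaRank hd.mono hθ0.le) (submodular_nochkaRank hd.submodular)
    (fun j => (nochkaRank_singleton (S₀ := S₀) hd hθ1 j).symm ▸ hθ0)
  refine ⟨ω, θ, fun j => ⟨hωpos j, ?_⟩, hθ1, hωsum.trans (nochkaRank_univ h),
    h.div_le hd.empty hkN, h.le_div hd hι hkN,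
    fun R hR => (hωle R).trans (nochkaRank_le h hd hι hkN hR)⟩
  simpa [nochkaRank_singleton hd hθ1] using hωle {j}

end NochkaRank

section DimSpan

variable (A : Fin q → (Fin (k + 1) → ℂ))

lemma submodular_dimSpan : Submodular (dimSpan A) := by
  intro R S
  set V : Finset (Fin q) → Submodule ℂ (Fin (k + 1) → ℂ) := fun R => Submodule.span ℂ (A '' R)
  have hunion : V (R ∪ S) = V R ⊔ V S := by
    simp only [V, coe_union, Set.image_union, Submodule.span_union]
  have hinter : V (R ∩ S) ≤ V R ⊓ V S :=
    le_inf (Submodule.span_mono (Set.image_mono (by simp)))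
      (Submodule.span_mono (Set.image_mono (by simp)))
  have := Submodule.finrank_mono hinter
  have := Submodule.finrank_sup_add_finrank_inf_eq (V R) (V S)
  change Module.finrank ℂ (V (R ∪ S)) + Module.finrank ℂ (V (R ∩ S))
    ≤ Module.finrank ℂ (V R) + Module.finrank ℂ (V S)
  rw [hunion]
  omega

lemma isSubgeneralRank_dimSpan {N : ℕ} (hA : ∀ j, A j ≠ 0) (hpos : SubgeneralPosition N A) :
    IsSubgeneralRank N k (dimSpan A) where
  empty := by simp [dimSpan]
  mono _ _ h := Submodule.finrank_mono (Submodule.span_mono (Set.image_mono (coe_subset.2 h)))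
  submodular := submodular_dimSpan A
  le_card R := by
    rw [dimSpan, ← coe_image]
    exact (finrank_span_finset_le_card _).trans card_image_le
  singleton j := by
    rw [dimSpan, coe_singleton, Set.image_singleton]
    exact finrank_span_singleton (hA j)
  full := hpos

end DimSpan

theorem nochka_general (q N k : ℕ) (hNk : k ≤ N) (hq : (q : ℤ) > 2 * N - k + 1)
    (A : Fin q → (Fin (k + 1) → ℂ))
    (hunit : ∀ j, ∑ i, ‖A j i‖ ^ 2 = 1)
    (hpos : SubgeneralPosition N A) :
    ∃ (ω : Fin q → ℚ) (θ : ℚ),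
      (∀ j, 0 < ω j ∧ ω j ≤ θ) ∧ θ ≤ 1 ∧
      (∑ j, ω j) = (k : ℚ) + 1 + θ * ((q : ℚ) - 2 * (N : ℚ) + (k : ℚ) - 1) ∧
      ((k : ℚ) + 1) / (2 * (N : ℚ) - (k : ℚ) + 1) ≤ θ ∧
      θ ≤ ((k : ℚ) + 1) / ((N : ℚ) + 1) ∧
      ∀ R : Finset (Fin q), 0 < R.card → R.card ≤ N + 1 →
        (∑ j ∈ R, ω j) ≤ (dimSpan A R : ℚ) := by
  have hA : ∀ j, A j ≠ 0 := fun j hj => by simpa [hj] using hunit j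
  have hqN : N + 1 ≤ Fintype.card (Fin q) := by rw [Fintype.card_fin]; omega
  obtain ⟨ω, θ, hω, hθ1, hsum, hθlo, hθhi, hR⟩ :=
    exists_nochka_weights (isSubgeneralRank_dimSpan A hA hpos) hNk hqN
  rw [Fintype.card_fin] at hsum
  exact ⟨ω, θ, hω, hθ1, hsum, hθlo, hθhi, fun R _ hRN => hR R hRN⟩

/-- Nochka's theorem: for q hyperplanes in ℙ^k(ℂ) in N-subgeneral position with
q > 2N − k + 1, there exist Nochka weights ω(j) and a Nochka constant θ with the
stated properties. -/
theorem nochka (q N k : ℕ) (hk : 1 ≤ k) (hNk : k ≤ N) (hq : (q : ℤ) > 2 * N - k + 1)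
    (A : Fin q → (Fin (k + 1) → ℂ))
    (hunit : ∀ j, ∑ i, ‖A j i‖ ^ 2 = 1)
    (hpos : SubgeneralPosition N A) :
    ∃ (ω : Fin q → ℚ) (θ : ℚ),
      (∀ j, 0 < ω j ∧ ω j ≤ θ) ∧ θ ≤ 1 ∧
      (∑ j, ω j) = (k : ℚ) + 1 + θ * ((q : ℚ) - 2 * (N : ℚ) + (k : ℚ) - 1) ∧
      ((k : ℚ) + 1) / (2 * (N : ℚ) - (k : ℚ) + 1) ≤ θ ∧
      θ ≤ ((k : ℚ) + 1) / ((N : ℚ) + 1) ∧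
      ∀ R : Finset (Fin q), 0 < R.card → R.card ≤ N + 1 →
        (∑ j ∈ R, ω j) ≤ (dimSpan A R : ℚ) :=
  nochka_general q N k hNk hq A hunit hpos
end

section
/- Under the hypotheses on Nochka weights (0 < ω(j) ≤ θ, Σω(j) = k+1+θ(q−2N+k−1)) and with γ = Σ_{j=1}^q ω(j)(1−η_j) − k − 1, θ ≥ (k+1)/(2N−k+1), and Σ_{j=1}^q(1−η_j) − 2N + k − 1 > (2N−k+1)k/2, one has γ > σ_k where σ_k = k(k+1)/2. -/
open Finset

/-- With Nochka weights (0 < ω(j) ≤ θ ≤ 1, Σω(j) = k+1+θ(q−2N+k−1), θ ≥ (k+1)/(2N−k+1)),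
nonnegative η_j, and Σ(1−η_j) − 2N + k − 1 > (2N−k+1)k/2, the quantity
γ = Σ ω(j)(1−η_j) − k − 1 satisfies γ > σ_k = k(k+1)/2. -/
theorem gamma_gt_sigma (q N k : ℕ) (hk : 1 ≤ k) (hNk : k ≤ N)
    (hq : (q : ℤ) > 2 * N - k + 1) (hN1 : (2 * N - k + 1 : ℤ) ≥ N + 1)
    (ω : Fin q → ℝ) (θ : ℝ) (hω : ∀ j, 0 < ω j ∧ ω j ≤ θ) (hθ1 : θ ≤ 1)
    (hsum : ∑ j, ω j = (k : ℝ) + 1 + θ * ((q : ℝ) - 2 * (N : ℝ) + (k : ℝ) - 1))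
    (hθ : θ ≥ ((k : ℝ) + 1) / (2 * (N : ℝ) - (k : ℝ) + 1))
    (η : Fin q → ℝ) (hη : ∀ j, 0 ≤ η j)
    (hmain : (∑ j, (1 - η j)) - 2 * (N : ℝ) + (k : ℝ) - 1 >
      (2 * (N : ℝ) - (k : ℝ) + 1) * (k : ℝ) / 2) :
    (∑ j, ω j * (1 - η j)) - (k : ℝ) - 1 > (k : ℝ) * ((k : ℝ) + 1) / 2 := by
  have hkN : (k:ℝ) ≤ N := by exact_mod_cast hNk
  have hT : (0:ℝ) < 2*(N:ℝ) - k + 1 := by linarith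
  have hθpos : 0 < θ := lt_of_lt_of_le (div_pos (by positivity) hT) hθ
  have hθT : ((k:ℝ)+1) ≤ θ * (2*(N:ℝ) - k + 1) := by
    rw [ge_iff_le, div_le_iff₀ hT] at hθ; linarith
  have h1 : ∑ j, (ω j - θ * η j) ≤ ∑ j, ω j * (1 - η j) := by
    apply Finset.sum_le_sum
    intro j _
    have h := hω j
    have hm : ω j * η j ≤ θ * η j := mul_le_mul_of_nonneg_right h.2 (hη j)
    nlinarith [hm]
  have h2 : ∑ j, (ω j - θ * η j) = ∑ j, ω j - θ * ∑ j, η j := by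
    rw [Finset.sum_sub_distrib, Finset.mul_sum]
  have h3 : ∑ j, (1 - η j) = (q:ℝ) - ∑ j, η j := by
    rw [Finset.sum_sub_distrib]; simp
  have hk' : (0:ℝ) ≤ k := Nat.cast_nonneg k
  have h4 : θ * ((∑ j, (1 - η j)) - 2*(N:ℝ) + k - 1) > θ * ((2*(N:ℝ) - k + 1)*k/2) :=
    mul_lt_mul_of_pos_left hmain hθpos
  have h5 : θ * ((2*(N:ℝ) - k + 1)*k/2) ≥ (k:ℝ)*(k+1)/2 := by nlinarith
  nlinarith [h1, h2, h3, hsum, h4, h5]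
end
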